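/- arXiv:0811.3390 — 4 statements merged into one kernel-verified Lean document; each statement's English description precedes it below -/
import Mathlib

section
/- Let a and b be coprime integers with 0 < a < b, let β ∈ ℂ, fix k ∈ {0,1,…,a−1}, and let s ≥ b/a be a real number. Define c_m = ((β − bk)/a)_{bm} · k! / (k + am)! for m ∈ ℕ. Then there exist constants C, D > 0 such that |c_m| ≤ C · D^m · ((a·m)!)^{s−1} for all m ∈ ℕ. -/
/-!
With `z = (β - bk)/a`, the falling factorial `(z)_n` is at most `(‖z‖ + 1)^n n!` in norm, so
`‖c_m‖ ≤ k! (‖z‖ + 1)^{bm} (bm)! / (am)!`. Comparing `(bm)! ≤ (bm)^{bm}` with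
`(am)^{am} ≤ e^{am} (am)!` gives `(bm)! ≤ (e b / a)^{bm} ((am)!)^{b/a}`, hence
`‖c_m‖ ≤ k! D^m ((am)!)^{b/a - 1} ≤ k! D^m ((am)!)^{s - 1}`.
-/

open Nat Real

theorem norm_descPochhammer_eval_le {R : Type*} [NormedRing R] [NormOneClass R] (z : R) (n : ℕ) :
    ‖(descPochhammer R n).eval z‖ ≤ (‖z‖ + 1) ^ n * n ! := by
  induction n with
  | zero => simp
  | succ n ih =>
    have hfactor : ‖z - n‖ ≤ (‖z‖ + 1) * (n + 1) := calc
      ‖z - n‖ ≤ ‖z‖ + n := (norm_sub_le _ _).trans (by simpa using Nat.norm_cast_le (α := R) n)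
      _ ≤ (‖z‖ + 1) * (n + 1) := by nlinarith [norm_nonneg z]
    calc ‖(descPochhammer R (n + 1)).eval z‖ ≤ ‖(descPochhammer R n).eval z‖ * ‖z - n‖ := by
          rw [descPochhammer_succ_eval]; exact norm_mul_le _ _
      _ ≤ (‖z‖ + 1) ^ n * n ! * ((‖z‖ + 1) * (n + 1)) := by gcongr
      _ = (‖z‖ + 1) ^ (n + 1) * (n + 1)! := by push_cast [factorial_succ]; ring

theorem pow_self_le_exp_mul_factorial (n : ℕ) : (n : ℝ) ^ n ≤ exp n * n ! := by
  have := pow_div_factorial_le_exp (n : ℝ) n.cast_nonneg n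
  rwa [div_le_iff₀ (by positivity)] at this

theorem factorial_mul_le_rpow {a : ℕ} (ha : 0 < a) (b m : ℕ) :
    ((b * m)! : ℝ) ≤ (exp 1 * b / a) ^ (b * m) * ((a * m)! : ℝ) ^ ((b : ℝ) / a) := by
  have hexp : ((a * m : ℕ) : ℝ) * (b / a) = (b * m : ℕ) := by
    have : (a : ℝ) ≠ 0 := mod_cast ha.ne'
    push_cast; field_simp
  calc ((b * m)! : ℝ) ≤ ((b * m : ℕ) : ℝ) ^ (b * m) := mod_cast factorial_le_pow _
    _ = ((b : ℝ) / a) ^ (b * m) * (((a * m : ℕ) : ℝ) ^ (a * m)) ^ ((b : ℝ) / a) := by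
        rw [← rpow_natCast _ (a * m), ← rpow_mul (by positivity), hexp, rpow_natCast, ← mul_pow,
          ← hexp, mul_comm]
    _ ≤ ((b : ℝ) / a) ^ (b * m) * (exp (a * m : ℕ) * (a * m)!) ^ ((b : ℝ) / a) := by
        gcongr; exact pow_self_le_exp_mul_factorial _
    _ = (exp 1 * b / a) ^ (b * m) * ((a * m)! : ℝ) ^ ((b : ℝ) / a) := by
        rw [mul_rpow (by positivity) (by positivity), ← exp_mul, hexp, ← exp_one_pow, mul_div_assoc,
          mul_pow]
        ring

theorem gamma_series_coeff_gevrey_bound_general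
    (a b : ℕ) (ha : 0 < a)
    (β : ℂ) (k : ℕ) (s : ℝ) (hs : (b : ℝ) / (a : ℝ) ≤ s)
    (c : ℕ → ℂ)
    (hc : ∀ m : ℕ, c m =
      (descPochhammer ℂ (b * m)).eval ((β - (b : ℂ) * (k : ℂ)) / (a : ℂ))
        * (k.factorial : ℂ) / ((k + a * m).factorial : ℂ)) :
    ∃ C D : ℝ, 0 < C ∧ 0 < D ∧
      ∀ m : ℕ, ‖c m‖ ≤ C * D ^ m * (((a * m).factorial : ℝ)) ^ (s - 1) := by
  set z : ℂ := (β - b * k) / a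
  have hD : 0 < ((‖z‖ + 1) * (exp 1 * b / a)) ^ b := by
    rcases b.eq_zero_or_pos with rfl | hb
    · simp
    · have : (0 : ℝ) < b := mod_cast hb
      positivity
  refine ⟨k !, _, by positivity, hD, fun m => ?_⟩
  calc ‖c m‖ = ‖(descPochhammer ℂ (b * m)).eval z‖ * k ! / (k + a * m)! := by
        rw [hc m, norm_div, norm_mul]; simp only [Complex.norm_natCast]
    _ ≤ (‖z‖ + 1) ^ (b * m) * (b * m)! * k ! / (a * m)! := by
        gcongr
        · exact norm_descPochhammer_eval_le z (b * m)
        · exact Nat.le_add_left _ _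
    _ ≤ (‖z‖ + 1) ^ (b * m) * ((exp 1 * b / a) ^ (b * m) * ((a * m)! : ℝ) ^ ((b : ℝ) / a))
          * k ! / (a * m)! := by
        gcongr; exact factorial_mul_le_rpow ha b m
    _ = k ! * (((‖z‖ + 1) * (exp 1 * b / a)) ^ b) ^ m * ((a * m)! : ℝ) ^ ((b : ℝ) / a - 1) := by
        rw [rpow_sub (by positivity), rpow_one, ← pow_mul, mul_pow]
        ring
    _ ≤ k ! * (((‖z‖ + 1) * (exp 1 * b / a)) ^ b) ^ m * ((a * m)! : ℝ) ^ (s - 1) := by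
        gcongr
        exact_mod_cast (a * m).factorial_pos

/-- For coprime `0 < a < b`, `β ∈ ℂ`, `k ∈ {0,…,a-1}` and a real `s ≥ b/a`, the coefficients
`c_m = ((β - bk)/a)_{bm} · k! / (k + am)!` of the Γ-series `φ_{v^k}` satisfy a Gevrey-type
bound `|c_m| ≤ C · D^m · ((a·m)!)^{s-1}` for some constants `C, D > 0`. -/
theorem gamma_series_coeff_gevrey_bound
    (a b : ℕ) (hab : Nat.Coprime a b) (ha : 0 < a) (haltb : a < b)
    (β : ℂ) (k : ℕ) (hk : k < a) (s : ℝ) (hs : (b : ℝ) / (a : ℝ) ≤ s)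
    (c : ℕ → ℂ)
    (hc : ∀ m : ℕ, c m =
      (descPochhammer ℂ (b * m)).eval ((β - (b : ℂ) * (k : ℂ)) / (a : ℂ))
        * (k.factorial : ℂ) / ((k + a * m).factorial : ℂ)) :
    ∃ C D : ℝ, 0 < C ∧ 0 < D ∧
      ∀ m : ℕ, ‖c m‖ ≤ C * D ^ m * (((a * m).factorial : ℝ)) ^ (s - 1) :=
  gamma_series_coeff_gevrey_bound_general a b ha β k s hs c hc
end

section
/- Let a and b be coprime integers with 0 < a < b, β ∈ ℂ, and fix a real s ≥ 1. Let f, g ∈ ℂ[[x₁,x₂]] be Gevrey of order s and suppose that (E + ab) f − P g is convergent, where ((E + ab) f)_{(i,j)} = (a·i + b·j − β + ab)·f_{(i,j)}. Then there exists h ∈ ℂ[[x₁,x₂]], Gevrey of order s, such that P h − f and E h − g are both convergent. (This expresses the vanishing of the degree-one cohomology of the irregularity complex Irr_Y^{(s)}(M_A(β)) at the origin.) -/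
/-!
`E` is diagonal: it multiplies `x₁^i x₂^j` by `a i + b j - β`. Take `h := E⁻¹ g` coefficientwise,
with `h_{(i,j)} = 0` at the resonant indices `a i + b j = β`. The numbers `n - β` (`n ∈ ℕ`) that
are nonzero stay a fixed distance away from `0`, so `h` is Gevrey of order `s`, and `E h - g` lives
on the resonant indices, which lie in the finitely many rows `j ≤ ‖β‖` where the Gevrey factor
`(j!)^(s-1)` is bounded. Since `P` lowers the weight `a i + b j` by `ab`, `P E⁻¹ = (E + ab)⁻¹ P`,
so off resonance `P h - f = -(E + ab)⁻¹ ((E + ab) f - P g)` is convergent, while at the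
resonant indices of `E + ab` it is `-f`, again on finitely many rows.
-/

noncomputable section

abbrev M2 : Type := MvPowerSeries (Fin 2) ℂ

/-- Coefficient `f_{(i,j)}` of a formal power series `f ∈ ℂ[[x₁,x₂]]`. -/
def co (f : M2) (i j : ℕ) : ℂ :=
  MvPowerSeries.coeff (Finsupp.single (0 : Fin 2) i + Finsupp.single (1 : Fin 2) j) f

/-- A coefficient family `F` is Gevrey of order `s` along `x₂ = 0`:
`|F i j| ≤ C·R^(i+j)·(j!)^(s-1)` for some `C, R > 0`. -/
def GevreyFn (s : ℝ) (F : ℕ → ℕ → ℂ) : Prop :=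
  ∃ C R : ℝ, 0 < C ∧ 0 < R ∧
    ∀ i j : ℕ, ‖F i j‖ ≤ C * R ^ (i + j) * (j.factorial : ℝ) ^ (s - 1)

/-- A coefficient family is convergent iff it is Gevrey of order `1`, i.e.
`|F i j| ≤ C·R^(i+j)` for some `C, R > 0`. -/
def ConvFn (F : ℕ → ℕ → ℂ) : Prop := GevreyFn 1 F

/-- Coefficients of `P f` where `P = ∂₁^b - ∂₂^a`:
`(P f)_{(i,j)} = ((i+b)!/i!)·f_{(i+b,j)} - ((j+a)!/j!)·f_{(i,j+a)}`. -/
def Pco (a b : ℕ) (f : M2) (i j : ℕ) : ℂ :=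
  (((i + b).factorial / i.factorial : ℕ) : ℂ) * co f (i + b) j
    - (((j + a).factorial / j.factorial : ℕ) : ℂ) * co f i (j + a)

/-- Coefficients of `E f` where `E = a·x₁∂₁ + b·x₂∂₂ - β`:
`(E f)_{(i,j)} = (a·i + b·j - β)·f_{(i,j)}`. -/
def Eco (a b : ℕ) (β : ℂ) (f : M2) (i j : ℕ) : ℂ :=
  (((a * i + b * j : ℕ) : ℂ) - β) * co f i j

/-- Coefficients of `E_p f` where `E_p = a·(t₁+ε)∂₁ + b·x₂∂₂ - β`:
`(E_p f)_{(i,j)} = (a·i + b·j - β)·f_{(i,j)} + a·ε·(i+1)·f_{(i+1,j)}`. -/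
def Epco (a b : ℕ) (β ε : ℂ) (f : M2) (i j : ℕ) : ℂ :=
  (((a * i + b * j : ℕ) : ℂ) - β) * co f i j + (a : ℂ) * ε * ((i : ℂ) + 1) * co f (i + 1) j

open scoped Nat

theorem exists_pos_le_norm_natCast_sub (β : ℂ) :
    ∃ δ > 0, ∀ n : ℕ, (n : ℂ) - β ≠ 0 → δ ≤ ‖(n : ℂ) - β‖ := by
  have hclosed : IsClosed (Set.range ((↑) : ℕ → ℂ) \ {β}) := by
    refine Metric.isClosed_of_pairwise_le_dist one_pos ?_
    rintro _ ⟨⟨m, rfl⟩, -⟩ _ ⟨⟨n, rfl⟩, -⟩ hmn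
    have h : 1 ≤ dist m n := Nat.pairwise_one_le_dist fun h => hmn (congrArg _ h)
    rwa [Complex.dist_of_im_eq (by simp), Complex.natCast_re, Complex.natCast_re,
      Nat.dist_cast_real]
  obtain ⟨δ, hδ, hball⟩ := Metric.isOpen_iff.1 hclosed.isOpen_compl β (by simp)
  refine ⟨δ, hδ, fun n hn => ?_⟩
  by_contra! h
  exact hball (by simpa [dist_eq_norm] using h) ⟨⟨n, rfl⟩, sub_ne_zero.1 hn⟩

theorem le_floor_norm_of_natCast_eq {β : ℂ} {n j : ℕ} (h : (n : ℂ) = β) (hj : j ≤ n) :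
    j ≤ ⌊‖β‖⌋₊ :=
  Nat.le_floor (by rw [← h, Complex.norm_natCast]; exact_mod_cast hj)

section Gevrey

variable {s : ℝ} {F G H : ℕ → ℕ → ℂ}

theorem GevreyFn.mono (hF : GevreyFn s F) (h : ∀ i j, ‖G i j‖ ≤ ‖F i j‖) : GevreyFn s G := by
  obtain ⟨C, R, hC, hR, hFle⟩ := hF
  exact ⟨C, R, hC, hR, fun i j => (h i j).trans (hFle i j)⟩

theorem GevreyFn.of_norm_le_add (hF : GevreyFn s F) (hG : GevreyFn s G)
    (h : ∀ i j, ‖H i j‖ ≤ ‖F i j‖ + ‖G i j‖) : GevreyFn s H := by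
  obtain ⟨C, R, hC, hR, hFle⟩ := hF
  obtain ⟨C', R', hC', hR', hGle⟩ := hG
  refine ⟨C + C', max R R', by positivity, lt_max_of_lt_left hR, fun i j => ?_⟩
  calc ‖H i j‖
      ≤ C * R ^ (i + j) * (j ! : ℝ) ^ (s - 1) + C' * R' ^ (i + j) * (j ! : ℝ) ^ (s - 1) :=
        (h i j).trans (add_le_add (hFle i j) (hGle i j))
    _ ≤ C * max R R' ^ (i + j) * (j ! : ℝ) ^ (s - 1)
          + C' * max R R' ^ (i + j) * (j ! : ℝ) ^ (s - 1) := by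
        gcongr
        · exact le_max_left R R'
        · exact le_max_right R R'
    _ = (C + C') * max R R' ^ (i + j) * (j ! : ℝ) ^ (s - 1) := by ring

theorem GevreyFn.div (hF : GevreyFn s F) {D : ℕ → ℕ → ℂ} {δ : ℝ} (hδ : 0 < δ)
    (hD : ∀ i j, D i j ≠ 0 → δ ≤ ‖D i j‖) : GevreyFn s fun i j => F i j / D i j := by
  obtain ⟨C, R, hC, hR, hFle⟩ := hF
  refine ⟨C / δ, R, div_pos hC hδ, hR, fun i j => ?_⟩
  dsimp only
  rcases eq_or_ne (D i j) 0 with h0 | h0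
  · rw [h0, div_zero, norm_zero]
    positivity
  · calc ‖F i j / D i j‖ = ‖F i j‖ / ‖D i j‖ := norm_div _ _
      _ ≤ C * R ^ (i + j) * (j ! : ℝ) ^ (s - 1) / δ := by
        gcongr
        exacts [hFle i j, hD i j h0]
      _ = C / δ * R ^ (i + j) * (j ! : ℝ) ^ (s - 1) := by ring

theorem GevreyFn.convFn_rowRestrict (hs : 1 ≤ s) (hF : GevreyFn s F) (N : ℕ) :
    ConvFn fun i j => if j ≤ N then F i j else 0 := by
  obtain ⟨C, R, hC, hR, hFle⟩ := hF
  refine ⟨C * (N ! : ℝ) ^ (s - 1), R, by positivity, hR, fun i j => ?_⟩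
  rw [sub_self, Real.rpow_zero, mul_one]
  dsimp only
  split_ifs with hj
  · calc ‖F i j‖ ≤ C * R ^ (i + j) * (j ! : ℝ) ^ (s - 1) := hFle i j
      _ ≤ C * R ^ (i + j) * (N ! : ℝ) ^ (s - 1) := by
        gcongr
      _ = C * (N ! : ℝ) ^ (s - 1) * R ^ (i + j) := by ring
  · rw [norm_zero]
    positivity

end Gevrey

section Euler

variable {a b : ℕ} {β : ℂ}

/-- At the resonant indices `a i + b j = β` the coefficient is `0`, as division by `0` is `0`. -/
def eulerInv (a b : ℕ) (β : ℂ) (g : M2) : M2 :=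
  fun m => co g (m 0) (m 1) / (((a * m 0 + b * m 1 : ℕ) : ℂ) - β)

theorem co_eulerInv (g : M2) (i j : ℕ) :
    co (eulerInv a b β g) i j = co g i j / (((a * i + b * j : ℕ) : ℂ) - β) := by
  simp [co, eulerInv, MvPowerSeries.coeff_apply]

theorem Pco_eulerInv (g : M2) (i j : ℕ) :
    Pco a b (eulerInv a b β g) i j = Pco a b g i j / (((a * i + b * j : ℕ) : ℂ) - β + a * b) := by
  have h₁ : ((a * (i + b) + b * j : ℕ) : ℂ) - β = ((a * i + b * j : ℕ) : ℂ) - β + a * b := by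
    push_cast; ring
  have h₂ : ((a * i + b * (j + a) : ℕ) : ℂ) - β = ((a * i + b * j : ℕ) : ℂ) - β + a * b := by
    push_cast; ring
  simp only [Pco, co_eulerInv, h₁, h₂, sub_div, mul_div_assoc]

theorem norm_Eco_eulerInv_sub_le (hb : 0 < b) (g : M2) (i j : ℕ) :
    ‖Eco a b β (eulerInv a b β g) i j - co g i j‖ ≤ ‖if j ≤ ⌊‖β‖⌋₊ then co g i j else 0‖ := by
  rw [Eco, co_eulerInv]
  rcases eq_or_ne (((a * i + b * j : ℕ) : ℂ) - β) 0 with h0 | h0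
  · have hj : j ≤ a * i + b * j := le_add_left (Nat.le_mul_of_pos_left j hb)
    rw [h0, zero_mul, zero_sub, norm_neg,
      if_pos (le_floor_norm_of_natCast_eq (sub_eq_zero.1 h0) hj)]
  · rw [mul_div_cancel₀ _ h0, sub_self, norm_zero]
    exact norm_nonneg _

theorem norm_Pco_eulerInv_sub_le (hb : 0 < b) (f g : M2) (i j : ℕ) :
    ‖Pco a b (eulerInv a b β g) i j - co f i j‖ ≤
      ‖((((a * i + b * j : ℕ) : ℂ) - β + a * b) * co f i j - Pco a b g i j) /
          (((a * i + b * j : ℕ) : ℂ) - β + a * b)‖ +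
        ‖if j ≤ ⌊‖β‖⌋₊ then co f i j else 0‖ := by
  rw [Pco_eulerInv]
  set d := ((a * i + b * j : ℕ) : ℂ) - β + a * b with hd
  rcases eq_or_ne d 0 with h0 | h0
  · have hres : ((a * i + b * j + a * b : ℕ) : ℂ) = β := by
      rw [hd] at h0
      push_cast at h0 ⊢
      linear_combination h0
    have hj : j ≤ a * i + b * j + a * b :=
      le_add_right (le_add_left (Nat.le_mul_of_pos_left j hb))
    rw [h0, div_zero, div_zero, zero_sub, norm_neg, norm_zero, zero_add,
      if_pos (le_floor_norm_of_natCast_eq hres hj)]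
  · have h : Pco a b g i j / d - co f i j = -((d * co f i j - Pco a b g i j) / d) := by
      field_simp
      ring
    rw [h, norm_neg]
    exact le_add_of_nonneg_right (norm_nonneg _)

end Euler

theorem ext_one_irregularity_at_origin_vanishes_general
    (a b : ℕ) (haltb : a < b) (β : ℂ)
    (s : ℝ) (hs : 1 ≤ s) (f g : M2)
    (hf : GevreyFn s (co f)) (hg : GevreyFn s (co g))
    (hfg : ConvFn fun i j =>
      ((((a * i + b * j : ℕ) : ℂ) - β + (a : ℂ) * (b : ℂ)) * co f i j) - Pco a b g i j) :
    ∃ h : M2, GevreyFn s (co h) ∧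
      (ConvFn fun i j => Pco a b h i j - co f i j) ∧
      (ConvFn fun i j => Eco a b β h i j - co g i j) := by
  have hb : 0 < b := Nat.zero_lt_of_lt haltb
  obtain ⟨δ, hδ, hδle⟩ := exists_pos_le_norm_natCast_sub β
  have hshift : ∀ i j,
      ((a * i + b * j : ℕ) : ℂ) - β + a * b = ((a * i + b * j + a * b : ℕ) : ℂ) - β :=
    fun i j => by push_cast; ring
  refine ⟨eulerInv a b β g, ?_, ?_, ?_⟩
  · simpa only [← co_eulerInv] using hg.div hδ fun i j => hδle (a * i + b * j)
  · exact (GevreyFn.div hfg hδ fun i j => hshift i j ▸ hδle _).of_norm_le_add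
      (hf.convFn_rowRestrict hs _) (norm_Pco_eulerInv_sub_le hb f g)
  · exact (hg.convFn_rowRestrict hs _).mono (norm_Eco_eulerInv_sub_le hb g)

/-- Vanishing of the degree-one cohomology of `Irr_Y^{(s)}(M_A(β))` at the origin: if `f, g`
are Gevrey of order `s` and `(E + ab) f - P g` is convergent, then there is `h` Gevrey of
order `s` such that `P h - f` and `E h - g` are both convergent. -/
theorem ext_one_irregularity_at_origin_vanishes
    (a b : ℕ) (hab : Nat.Coprime a b) (ha : 0 < a) (haltb : a < b) (β : ℂ)
    (s : ℝ) (hs : 1 ≤ s) (f g : M2)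
    (hf : GevreyFn s (co f)) (hg : GevreyFn s (co g))
    (hfg : ConvFn fun i j =>
      ((((a * i + b * j : ℕ) : ℂ) - β + (a : ℂ) * (b : ℂ)) * co f i j) - Pco a b g i j) :
    ∃ h : M2, GevreyFn s (co h) ∧
      (ConvFn fun i j => Pco a b h i j - co f i j) ∧
      (ConvFn fun i j => Eco a b β h i j - co g i j) :=
  ext_one_irregularity_at_origin_vanishes_general a b haltb β s hs f g hf hg hfg

end
end

section
/- Let a and b be coprime integers with 0 < a < b and β ∈ ℂ. The ℂ-vector space {f ∈ ℂ[[x₁,x₂]] : P f = 0 and (a·i + b·j − β)·f_{(i,j)} = 0 for all (i,j)} of formal power series solutions of the hypergeometric system at the origin has dimension 1 if β = a·n₁ + b·n₂ for some n₁, n₂ ∈ ℕ, and dimension 0 otherwise. -/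
noncomputable section

lemma co_add (f g : M2) (i j : ℕ) : co (f + g) i j = co f i j + co g i j := by simp [co]

lemma co_smul (c : ℂ) (f : M2) (i j : ℕ) : co (c • f) i j = c * co f i j := by simp [co]

lemma co_zero (i j : ℕ) : co (0 : M2) i j = 0 := by simp [co]

lemma gevreyFn_zero {s : ℝ} : GevreyFn s fun _ _ => (0 : ℂ) :=
  ⟨1, 1, one_pos, one_pos, by intro i j; simp; positivity⟩

lemma gevreyFn_add {s : ℝ} {F G : ℕ → ℕ → ℂ} (hF : GevreyFn s F) (hG : GevreyFn s G) :
    GevreyFn s fun i j => F i j + G i j := by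
  obtain ⟨C, R, hC, hR, h⟩ := hF
  obtain ⟨C', R', hC', hR', h'⟩ := hG
  refine ⟨C + C', max R R', by positivity, lt_of_lt_of_le hR (le_max_left _ _), fun i j => ?_⟩
  have h1 := h i j
  have h2 := h' i j
  have hRm : R ^ (i + j) ≤ (max R R') ^ (i + j) := pow_le_pow_left₀ hR.le (le_max_left _ _) _
  have hRm' : R' ^ (i + j) ≤ (max R R') ^ (i + j) := pow_le_pow_left₀ hR'.le (le_max_right _ _) _
  have hfac : (0 : ℝ) ≤ (j.factorial : ℝ) ^ (s - 1) := by positivity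
  calc ‖F i j + G i j‖ ≤ ‖F i j‖ + ‖G i j‖ :=
        norm_add_le _ _
    _ ≤ C * R ^ (i + j) * (j.factorial : ℝ) ^ (s - 1)
        + C' * R' ^ (i + j) * (j.factorial : ℝ) ^ (s - 1) := add_le_add h1 h2
    _ ≤ C * (max R R') ^ (i + j) * (j.factorial : ℝ) ^ (s - 1)
        + C' * (max R R') ^ (i + j) * (j.factorial : ℝ) ^ (s - 1) := by gcongr
    _ = (C + C') * (max R R') ^ (i + j) * (j.factorial : ℝ) ^ (s - 1) := by ring

lemma gevreyFn_smul {s : ℝ} (c : ℂ) {F : ℕ → ℕ → ℂ} (hF : GevreyFn s F) :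
    GevreyFn s fun i j => c * F i j := by
  obtain ⟨C, R, hC, hR, h⟩ := hF
  refine ⟨(‖c‖ + 1) * C, R, by positivity, hR, fun i j => ?_⟩
  have h1 := h i j
  calc ‖c * F i j‖ = ‖c‖ * ‖F i j‖ := by simp [map_mul]
    _ ≤ (‖c‖ + 1) * (C * R ^ (i + j) * (j.factorial : ℝ) ^ (s - 1)) := by
        apply mul_le_mul (by linarith) h1 (norm_nonneg _) (by positivity)
    _ = (‖c‖ + 1) * C * R ^ (i + j) * (j.factorial : ℝ) ^ (s - 1) := by ring

lemma gevreyFn_co_add {s : ℝ} {f g : M2} (hf : GevreyFn s (co f)) (hg : GevreyFn s (co g)) :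
    GevreyFn s (co (f + g)) := by
  have : co (f + g) = fun i j => co f i j + co g i j := by funext i j; exact co_add f g i j
  rw [this]; exact gevreyFn_add hf hg

lemma gevreyFn_co_smul {s : ℝ} (c : ℂ) {f : M2} (hf : GevreyFn s (co f)) :
    GevreyFn s (co (c • f)) := by
  have : co (c • f) = fun i j => c * co f i j := by funext i j; exact co_smul c f i j
  rw [this]; exact gevreyFn_smul c hf

lemma gevreyFn_co_zero {s : ℝ} : GevreyFn s (co (0 : M2)) := by
  have : co (0 : M2) = fun _ _ => (0 : ℂ) := by funext i j; exact co_zero i j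
  rw [this]; exact gevreyFn_zero

lemma pco_add (a b : ℕ) (f g : M2) (i j : ℕ) :
    Pco a b (f + g) i j = Pco a b f i j + Pco a b g i j := by
  simp only [Pco, co_add]; ring

lemma pco_smul (a b : ℕ) (c : ℂ) (f : M2) (i j : ℕ) :
    Pco a b (c • f) i j = c * Pco a b f i j := by
  simp only [Pco, co_smul]; ring

lemma pco_zero (a b : ℕ) (i j : ℕ) : Pco a b (0 : M2) i j = 0 := by
  simp [Pco, co_zero]

lemma eco_add (a b : ℕ) (β : ℂ) (f g : M2) (i j : ℕ) :
    Eco a b β (f + g) i j = Eco a b β f i j + Eco a b β g i j := by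
  simp only [Eco, co_add]; ring

lemma eco_smul (a b : ℕ) (β : ℂ) (c : ℂ) (f : M2) (i j : ℕ) :
    Eco a b β (c • f) i j = c * Eco a b β f i j := by
  simp only [Eco, co_smul]; ring

lemma eco_zero (a b : ℕ) (β : ℂ) (i j : ℕ) : Eco a b β (0 : M2) i j = 0 := by
  simp [Eco, co_zero]

lemma epco_add (a b : ℕ) (β ε : ℂ) (f g : M2) (i j : ℕ) :
    Epco a b β ε (f + g) i j = Epco a b β ε f i j + Epco a b β ε g i j := by
  simp only [Epco, co_add]; ring

lemma epco_smul (a b : ℕ) (β ε : ℂ) (c : ℂ) (f : M2) (i j : ℕ) :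
    Epco a b β ε (c • f) i j = c * Epco a b β ε f i j := by
  simp only [Epco, co_smul]; ring

lemma epco_zero (a b : ℕ) (β ε : ℂ) (i j : ℕ) : Epco a b β ε (0 : M2) i j = 0 := by
  simp [Epco, co_zero]

/-- The space of formal power series solutions of the hypergeometric system at the origin:
`P f = 0` and `E f = 0` (the latter meaning `(a·i + b·j - β)·f_{(i,j)} = 0` for all `(i,j)`). -/
def SolOrigin (a b : ℕ) (β : ℂ) : Submodule ℂ M2 where
  carrier := {f | (∀ i j : ℕ, Pco a b f i j = 0) ∧ ∀ i j : ℕ, Eco a b β f i j = 0}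
  add_mem' := by
    rintro f g ⟨hf1, hf2⟩ ⟨hg1, hg2⟩
    exact ⟨fun i j => by rw [pco_add, hf1 i j, hg1 i j, add_zero],
      fun i j => by rw [eco_add, hf2 i j, hg2 i j, add_zero]⟩
  zero_mem' := ⟨fun i j => pco_zero a b i j, fun i j => eco_zero a b β i j⟩
  smul_mem' := by
    rintro c f ⟨hf1, hf2⟩
    exact ⟨fun i j => by rw [pco_smul, hf1 i j, mul_zero],
      fun i j => by rw [eco_smul, hf2 i j, mul_zero]⟩


/-! In the coordinates `u i j = i! * j! * f_{(i,j)}` the equation `P f = 0` reads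
`u (i + b) j = u i (j + a)`, while `E f = 0` confines the support of `f` to the line
`a * i + b * j = β`. As `a` and `b` are coprime, two lattice points on that line differ by a
multiple of `(b, -a)`, so `u` is constant on it: the solutions are the multiples of
`∑_{a i + b j = n} x₁^i x₂^j / (i! j!)`, which is nonzero exactly when the line meets `ℕ²`. -/

open scoped Nat

lemma ext_co {f g : M2} (h : ∀ i j, co f i j = co g i j) : f = g := by
  ext d
  have hd : d = Finsupp.single 0 (d 0) + Finsupp.single 1 (d 1) := by
    ext k
    fin_cases k <;> simp
  rw [hd]
  exact h (d 0) (d 1)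

def scaledCo (f : M2) (i j : ℕ) : ℂ := i ! * j ! * co f i j

lemma scaledCo_smul (c : ℂ) (f : M2) (i j : ℕ) : scaledCo (c • f) i j = c * scaledCo f i j := by
  rw [scaledCo, scaledCo, co_smul]; ring

lemma scaledCo_eq_zero_iff {f : M2} {i j : ℕ} : scaledCo f i j = 0 ↔ co f i j = 0 := by
  simp [scaledCo, Nat.factorial_ne_zero]

lemma ext_scaledCo {f g : M2} (h : ∀ i j, scaledCo f i j = scaledCo g i j) : f = g :=
  ext_co fun i j => mul_left_cancel₀ (by simp [Nat.factorial_ne_zero]) (h i j)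

lemma pco_eq_zero_iff {a b : ℕ} {f : M2} {i j : ℕ} :
    Pco a b f i j = 0 ↔ scaledCo f (i + b) j = scaledCo f i (j + a) := by
  have hi : (i ! : ℂ) ≠ 0 := by exact_mod_cast i.factorial_ne_zero
  have hj : (j ! : ℂ) ≠ 0 := by exact_mod_cast j.factorial_ne_zero
  rw [Pco, scaledCo, scaledCo, sub_eq_zero,
    Nat.cast_div (Nat.factorial_dvd_factorial (Nat.le_add_right i b)) hi,
    Nat.cast_div (Nat.factorial_dvd_factorial (Nat.le_add_right j a)) hj]
  field_simp

lemma eco_eq_zero_iff {a b : ℕ} {β : ℂ} {f : M2} {i j : ℕ} :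
    Eco a b β f i j = 0 ↔ ((a * i + b * j : ℕ) : ℂ) = β ∨ co f i j = 0 := by
  rw [Eco, mul_eq_zero, sub_eq_zero]

def ShiftInvariant {α : Type*} (a b : ℕ) (u : ℕ → ℕ → α) : Prop :=
  ∀ i j, u (i + b) j = u i (j + a)

lemma shiftInvariant_scaledCo_iff {a b : ℕ} {f : M2} :
    ShiftInvariant a b (scaledCo f) ↔ ∀ i j, Pco a b f i j = 0 := by
  simp only [ShiftInvariant, pco_eq_zero_iff]

namespace ShiftInvariant

variable {α : Type*} {a b : ℕ} {u : ℕ → ℕ → α}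

lemma add_mul (hu : ShiftInvariant a b u) (i j k : ℕ) : u (i + b * k) j = u i (j + a * k) := by
  induction k generalizing j with
  | zero => simp
  | succ k ih =>
    calc u (i + b * (k + 1)) j = u (i + b * k + b) j := by ring_nf
      _ = u (i + b * k) (j + a) := hu _ _
      _ = u i (j + a * (k + 1)) := by rw [ih]; ring_nf

lemma eq_of_weight_eq (hu : ShiftInvariant a b u) (hab : a.Coprime b) (hb : 0 < b)
    {i j i' j' : ℕ} (h : a * i + b * j = a * i' + b * j') : u i j = u i' j' := by
  wlog hi : i' ≤ i generalizing i j i' j'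
  · exact (this h.symm (by omega)).symm
  obtain ⟨d, rfl⟩ := Nat.exists_eq_add_of_le hi
  obtain ⟨k, rfl⟩ : b ∣ d := by
    refine hab.symm.dvd_of_dvd_mul_left ⟨j' - j, ?_⟩
    have : a * d + b * j = b * j' := by linarith
    rw [Nat.mul_sub]
    omega
  have hj : j' = j + a * k := by
    apply Nat.eq_of_mul_eq_mul_left hb
    linarith
  rw [hj, hu.add_mul]

end ShiftInvariant

def polySol (a b n : ℕ) : M2 := fun d =>
  if a * d 0 + b * d 1 = n then ((d 0)! * (d 1)! : ℂ)⁻¹ else 0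

lemma scaledCo_polySol (a b n i j : ℕ) :
    scaledCo (polySol a b n) i j = if a * i + b * j = n then 1 else 0 := by
  rw [scaledCo, co, MvPowerSeries.coeff_apply]
  simp only [polySol, Finsupp.add_apply, Finsupp.single_apply, if_true, one_ne_zero, zero_ne_one,
    if_false, add_zero, zero_add]
  split_ifs
  · exact mul_inv_cancel₀ (by simp [Nat.factorial_ne_zero])
  · exact mul_zero _

lemma polySol_mem (a b n : ℕ) : polySol a b n ∈ SolOrigin a b n := by
  refine ⟨fun i j => pco_eq_zero_iff.2 ?_, fun i j => eco_eq_zero_iff.2 ?_⟩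
  · rw [scaledCo_polySol, scaledCo_polySol, show a * i + b * (j + a) = a * (i + b) + b * j by ring]
  · by_cases hw : a * i + b * j = n
    · exact .inl (congrArg Nat.cast hw)
    · rw [← scaledCo_eq_zero_iff, scaledCo_polySol, if_neg hw]
      exact .inr rfl

lemma polySol_ne_zero (a b n₁ n₂ : ℕ) : polySol a b (a * n₁ + b * n₂) ≠ 0 := by
  intro h
  have := scaledCo_polySol a b (a * n₁ + b * n₂) n₁ n₂
  simp [h, scaledCo, co_zero] at this

lemma solOrigin_eq_span {a b : ℕ} (hab : a.Coprime b) (hb : 0 < b) (n₁ n₂ : ℕ) :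
    SolOrigin a b ((a * n₁ + b * n₂ : ℕ) : ℂ) = ℂ ∙ polySol a b (a * n₁ + b * n₂) := by
  refine le_antisymm (fun f hf => Submodule.mem_span_singleton.2 ?_) ?_
  · obtain ⟨hP, hE⟩ := hf
    refine ⟨scaledCo f n₁ n₂, ext_scaledCo fun i j => ?_⟩
    rw [scaledCo_smul, scaledCo_polySol]
    split_ifs with hw
    · rw [mul_one, ((shiftInvariant_scaledCo_iff.2 hP).eq_of_weight_eq hab hb hw)]
    · rw [mul_zero, eq_comm, scaledCo_eq_zero_iff]
      exact (eco_eq_zero_iff.1 (hE i j)).resolve_left fun hw' => hw (by exact_mod_cast hw')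
  · exact (Submodule.span_singleton_le_iff_mem _ _).2 (polySol_mem a b _)

lemma solOrigin_eq_bot {a b : ℕ} {β : ℂ} (hβ : ¬ ∃ n₁ n₂ : ℕ, β = (a : ℂ) * n₁ + (b : ℂ) * n₂) :
    SolOrigin a b β = ⊥ := by
  refine (Submodule.eq_bot_iff _).2 fun f ⟨_, hE⟩ => ext_co fun i j => ?_
  refine ((eco_eq_zero_iff.1 (hE i j)).resolve_left fun hw => hβ ⟨i, j, ?_⟩).trans (co_zero i j).symm
  rw [← hw]; push_cast; rfl

/-- The space of formal power series solutions of the hypergeometric system at the origin has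
dimension `1` if `β ∈ a·ℕ + b·ℕ` and dimension `0` otherwise. -/
theorem dim_formal_solutions_at_origin
    (a b : ℕ) (hab : Nat.Coprime a b) (ha : 0 < a) (haltb : a < b) (β : ℂ) :
    ((∃ n₁ n₂ : ℕ, β = (a : ℂ) * n₁ + (b : ℂ) * n₂) →
        Module.rank ℂ (SolOrigin a b β) = 1) ∧
    ((¬ ∃ n₁ n₂ : ℕ, β = (a : ℂ) * n₁ + (b : ℂ) * n₂) →
        Module.rank ℂ (SolOrigin a b β) = 0) := by
  refine ⟨?_, fun hβ => by rw [solOrigin_eq_bot hβ, rank_bot]⟩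
  rintro ⟨n₁, n₂, rfl⟩
  have hβ : (a : ℂ) * n₁ + (b : ℂ) * n₂ = ((a * n₁ + b * n₂ : ℕ) : ℂ) := by push_cast; rfl
  rw [hβ, solOrigin_eq_span hab (ha.trans haltb), ← Module.finrank_eq_rank,
    finrank_span_singleton (polySol_ne_zero a b n₁ n₂), Nat.cast_one]

end
end

section
/- Let a and b be coprime integers with 0 < a < b, let ε ∈ ℂ with ε ≠ 0, suppose β = a·n₁ + b·n₂ for some n₁, n₂ ∈ ℕ, and let s be a real number with 1 ≤ s < b/a. Then the ℂ-vector space {f ∈ ℂ[[t₁,x₂]] : f is Gevrey of order s, P f = 0 and E_p f = 0} has dimension 1, and every element of it is a polynomial (has finite support). -/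
noncomputable section

/-- The space of Gevrey-order-`s` solutions of the hypergeometric system at `p = (ε,0)`. -/
def GSolP (a b : ℕ) (β ε : ℂ) (s : ℝ) : Submodule ℂ M2 where
  carrier := {f | GevreyFn s (co f) ∧ (∀ i j : ℕ, Pco a b f i j = 0) ∧
    ∀ i j : ℕ, Epco a b β ε f i j = 0}
  add_mem' := by
    rintro f g ⟨hf0, hf1, hf2⟩ ⟨hg0, hg1, hg2⟩
    exact ⟨gevreyFn_co_add hf0 hg0,
      fun i j => by rw [pco_add, hf1 i j, hg1 i j, add_zero],
      fun i j => by rw [epco_add, hf2 i j, hg2 i j, add_zero]⟩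
  zero_mem' := ⟨gevreyFn_co_zero, fun i j => pco_zero a b i j, fun i j => epco_zero a b β ε i j⟩
  smul_mem' := by
    rintro c f ⟨hf0, hf1, hf2⟩
    exact ⟨gevreyFn_co_smul c hf0,
      fun i j => by rw [pco_smul, hf1 i j, mul_zero],
      fun i j => by rw [epco_smul, hf2 i j, mul_zero]⟩

/-!
Each row `j` of a solution is determined by its first entry `f(0, j)` through `E_p f = 0`, and
`P f = 0` links row `j` to row `j + a`. Write `β = a p + b r` with `r < a`. The polynomial
`∑ₗ (t₁ + ε) ^ (p - b l) / (p - b l)! · x₂ ^ (r + a l) / (r + a l)!` is a solution with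
`f(0, r) ≠ 0`. Conversely, on a row `j ≢ r (mod a)` the factors `β - a i - b j` never vanish
(by coprimality), so `f(0, j) ≠ 0` forces `|f(0, j + a)| ≳ j ^ (b - a) |f(0, j)|` all along
`j + aℕ`; this outgrows the Gevrey ratio `R ^ a j ^ (a (s - 1))` because `a s < b`. Hence those
rows vanish, and a Gevrey solution with `f(0, r) = 0` vanishes row by row, so the solution space
is spanned by the polynomial.
-/

open Filter
open scoped Nat

theorem Submodule.le_span_singleton_of_disjoint_ker {K M : Type*} [Field K] [AddCommGroup M]
    [Module K M] {S : Submodule K M} (ℓ : M →ₗ[K] K) {g : M} (hg : g ∈ S) (hℓg : ℓ g ≠ 0)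
    (hS : Disjoint S (LinearMap.ker ℓ)) : S ≤ K ∙ g := by
  intro f hf
  have hsub : f - (ℓ f / ℓ g) • g ∈ S := S.sub_mem hf (S.smul_mem _ hg)
  have hker : f - (ℓ f / ℓ g) • g ∈ LinearMap.ker ℓ := by
    simp [LinearMap.mem_ker, div_mul_cancel₀ _ hℓg]
  rw [sub_eq_zero.mp (Submodule.disjoint_def.mp hS _ hsub hker)]
  exact Submodule.smul_mem _ _ (Submodule.mem_span_singleton_self g)

theorem not_bddAbove_range_of_eventually_two_mul_le {v : ℕ → ℝ} (hv : ∀ n, 0 < v n)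
    (h : ∀ᶠ n in atTop, 2 * v n ≤ v (n + 1)) : ¬ BddAbove (Set.range v) := by
  rintro ⟨M, hM⟩
  obtain ⟨N, hN⟩ := eventually_atTop.mp h
  have hgrow : ∀ t, 2 ^ t * v N ≤ v (N + t) := by
    intro t
    induction t with
    | zero => simp
    | succ t ih =>
      calc 2 ^ (t + 1) * v N = 2 * (2 ^ t * v N) := by ring
        _ ≤ 2 * v (N + t) := by linarith
        _ ≤ v (N + t + 1) := hN _ (Nat.le_add_right N t)
  obtain ⟨t, ht⟩ := pow_unbounded_of_one_lt (M / v N) one_lt_two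
  have := (div_lt_iff₀ (hv N)).mp ht
  linarith [hgrow t, hM (Set.mem_range_self (N + t))]

theorem add_factorial_div_factorial (j a : ℕ) : (j + a)! / j ! = (j + a).descFactorial a := by
  rw [Nat.descFactorial_eq_div (Nat.le_add_left a j), Nat.add_sub_cancel]

theorem factorial_add_le (j a : ℕ) : (j + a)! ≤ j ! * (j + a) ^ a := by
  rw [← Nat.factorial_mul_descFactorial (Nat.le_add_left a j), Nat.add_sub_cancel]
  exact Nat.mul_le_mul_left _ (Nat.descFactorial_le_pow _ _)

theorem factorial_add_rpow_le {t : ℝ} (ht : 0 ≤ t) (j a : ℕ) :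
    ((j + a)! : ℝ) ^ t ≤ (j ! : ℝ) ^ t * ((j : ℝ) + a) ^ (a * t) := by
  have hcast : ((j + a)! : ℝ) ≤ j ! * ((j : ℝ) + a) ^ a := by
    exact_mod_cast factorial_add_le j a
  calc ((j + a)! : ℝ) ^ t ≤ (j ! * ((j : ℝ) + a) ^ a) ^ t :=
        Real.rpow_le_rpow (by positivity) hcast ht
    _ = (j ! : ℝ) ^ t * ((j : ℝ) + a) ^ (a * t) := by
        rw [Real.mul_rpow (by positivity) (by positivity), ← Real.rpow_natCast,
          ← Real.rpow_mul (by positivity)]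

theorem eventually_mul_rpow_le_pow {e : ℝ} {b : ℕ} (he : 0 ≤ e) (heb : e < b) {K A c : ℝ}
    (hK : 0 ≤ K) (hA : 0 ≤ A) (hc : 0 < c) (N : ℝ) :
    ∀ᶠ x : ℝ in atTop, K * (x + A) ^ e ≤ ((b * x - N) / c) ^ b := by
  have hb : (1 : ℝ) ≤ b := by
    have : 0 < b := by exact_mod_cast he.trans_lt heb
    exact_mod_cast this
  filter_upwards [eventually_ge_atTop A, eventually_ge_atTop (2 * N), eventually_gt_atTop 0,
    (tendsto_rpow_atTop (sub_pos.mpr heb)).eventually_ge_atTop (K * 2 ^ e * (2 * c) ^ b)]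
    with x hxA hxN hx0 hxK
  calc K * (x + A) ^ e ≤ K * (2 * x) ^ e := by gcongr; linarith
    _ = K * 2 ^ e * (2 * c) ^ b * x ^ e / (2 * c) ^ b := by
        rw [Real.mul_rpow zero_le_two hx0.le]; field_simp
    _ ≤ x ^ ((b : ℝ) - e) * x ^ e / (2 * c) ^ b := by gcongr
    _ = (x / (2 * c)) ^ b := by
        rw [← Real.rpow_add hx0, sub_add_cancel, Real.rpow_natCast, div_pow]
    _ ≤ ((b * x - N) / c) ^ b := by
        gcongr ?_ ^ b
        have hx : x ≤ 2 * (b * x - N) := by nlinarith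
        rw [div_le_div_iff₀ (by positivity) hc]
        nlinarith [mul_le_mul_of_nonneg_right hx hc.le]

def ofCo (F : ℕ → ℕ → ℂ) : M2 := fun d => F (d 0) (d 1)

theorem co_ofCo (F : ℕ → ℕ → ℂ) (i j : ℕ) : co (ofCo F) i j = F i j := by
  have h : co (ofCo F) i j = F ((Finsupp.single 0 i + Finsupp.single 1 j : Fin 2 →₀ ℕ) 0)
      ((Finsupp.single 0 i + Finsupp.single 1 j : Fin 2 →₀ ℕ) 1) := rfl
  simp [h]

theorem eq_zero_of_forall_co_eq_zero {f : M2} (h : ∀ i j, co f i j = 0) : f = 0 := by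
  ext d
  have hd : d = Finsupp.single 0 (d 0) + Finsupp.single 1 (d 1) := by
    ext x
    fin_cases x <;> simp
  rw [hd]
  simpa [co] using h (d 0) (d 1)

theorem gevreyFn_of_finite {s : ℝ} (hs : 1 ≤ s) {F : ℕ → ℕ → ℂ}
    (hF : {q : ℕ × ℕ | F q.1 q.2 ≠ 0}.Finite) : GevreyFn s F := by
  obtain ⟨C, hC⟩ := (hF.image fun q => ‖F q.1 q.2‖).bddAbove
  refine ⟨max C 1, 1, by positivity, one_pos, fun i j => ?_⟩
  have hFij : ‖F i j‖ ≤ max C 1 := by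
    by_cases h : F i j = 0
    · simp [h]
    · exact (hC ⟨(i, j), h, rfl⟩).trans (le_max_left _ _)
  rw [one_pow, mul_one]
  exact hFij.trans (le_mul_of_one_le_right (by positivity)
    (Real.one_le_rpow (by exact_mod_cast j.factorial_pos) (by linarith)))

theorem mul_add_mul_ne_of_mod_ne {a b n₁ n₂ j : ℕ} (hab : Nat.Coprime a b)
    (hj : j % a ≠ n₂ % a) (i : ℕ) : a * n₁ + b * n₂ ≠ a * i + b * j := by
  intro h
  have hmod : b * n₂ ≡ b * j [MOD a] := by
    simpa [Nat.ModEq, Nat.mul_add_mod] using congrArg (· % a) h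
  exact hj (Nat.ModEq.cancel_left_of_coprime hab hmod).symm

section FormalSolutions

variable {a b : ℕ} {β ε : ℂ} {f : M2}

theorem mul_co_succ_of_epco (hE : ∀ i j, Epco a b β ε f i j = 0) (i j : ℕ) :
    a * ε * (i + 1) * co f (i + 1) j = (β - ((a * i + b * j : ℕ) : ℂ)) * co f i j := by
  have h := hE i j
  unfold Epco at h
  linear_combination h

theorem co_eq_zero_of_co_zero_eq_zero (hE : ∀ i j, Epco a b β ε f i j = 0) (ha : 0 < a)
    (hε : ε ≠ 0) {j : ℕ} (h0 : co f 0 j = 0) (i : ℕ) : co f i j = 0 := by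
  induction i with
  | zero => exact h0
  | succ i ih =>
    have h := mul_co_succ_of_epco hE i j
    rw [ih, mul_zero] at h
    exact (mul_eq_zero.mp h).resolve_left
      (mul_ne_zero (mul_ne_zero (by exact_mod_cast ha.ne') hε) (Nat.cast_add_one_ne_zero i))

theorem co_ne_zero_of_co_zero_ne_zero (hE : ∀ i j, Epco a b β ε f i j = 0) {j : ℕ}
    (hβ : ∀ i, β ≠ ((a * i + b * j : ℕ) : ℂ)) (h0 : co f 0 j ≠ 0) (i : ℕ) : co f i j ≠ 0 := by
  induction i with
  | zero => exact h0
  | succ i ih =>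
    intro hi
    have h := mul_co_succ_of_epco hE i j
    rw [hi, mul_zero] at h
    exact mul_ne_zero (sub_ne_zero.mpr (hβ i)) ih h.symm

theorem descFactorial_mul_co (hP : ∀ i j, Pco a b f i j = 0) (i j : ℕ) :
    ((i + b).descFactorial b : ℂ) * co f (i + b) j
      = ((j + a).descFactorial a : ℂ) * co f i (j + a) := by
  have h := hP i j
  rwa [Pco, add_factorial_div_factorial, add_factorial_div_factorial, sub_eq_zero] at h

theorem co_zero_add_ne_zero (hE : ∀ i j, Epco a b β ε f i j = 0)
    (hP : ∀ i j, Pco a b f i j = 0) {j : ℕ} (hβ : ∀ i, β ≠ ((a * i + b * j : ℕ) : ℂ))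
    (h0 : co f 0 j ≠ 0) : co f 0 (j + a) ≠ 0 := by
  intro h
  have hrel := descFactorial_mul_co hP 0 j
  simp only [zero_add, Nat.descFactorial_self, h, mul_zero] at hrel
  exact mul_ne_zero (by exact_mod_cast b.factorial_ne_zero)
    (co_ne_zero_of_co_zero_ne_zero hE hβ h0 b) hrel

theorem le_norm_co_succ (hE : ∀ i j, Epco a b β ε f i j = 0) {i j : ℕ} (hi : i < b) :
    (b * j - ‖β‖) / (a * ‖ε‖ * b) * ‖co f i j‖ ≤ ‖co f (i + 1) j‖ := by
  have hnorm : a * ‖ε‖ * (i + 1) * ‖co f (i + 1) j‖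
      = ‖β - ((a * i + b * j : ℕ) : ℂ)‖ * ‖co f i j‖ := by
    have hi1 : ‖(i : ℂ) + 1‖ = i + 1 := by exact_mod_cast Complex.norm_natCast (i + 1)
    simpa [norm_mul, hi1] using congrArg norm (mul_co_succ_of_epco hE i j)
  have hlow : (b * j : ℝ) - ‖β‖ ≤ ‖β - ((a * i + b * j : ℕ) : ℂ)‖ := by
    calc (b * j : ℝ) - ‖β‖ ≤ ‖((a * i + b * j : ℕ) : ℂ)‖ - ‖β‖ := by
          rw [Complex.norm_natCast]; push_cast; nlinarith [Nat.cast_nonneg (α := ℝ) (a * i)]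
      _ ≤ ‖β - ((a * i + b * j : ℕ) : ℂ)‖ := by rw [norm_sub_rev]; exact norm_sub_norm_le _ _
  rcases (show (0 : ℝ) ≤ a * ‖ε‖ * b by positivity).eq_or_lt with hD | hD
  · rw [← hD, div_zero, zero_mul]
    exact norm_nonneg _
  rw [div_mul_eq_mul_div, div_le_iff₀ hD]
  calc (b * j - ‖β‖) * ‖co f i j‖ ≤ ‖β - ((a * i + b * j : ℕ) : ℂ)‖ * ‖co f i j‖ :=
        mul_le_mul_of_nonneg_right hlow (norm_nonneg _)
    _ = a * ‖ε‖ * (i + 1) * ‖co f (i + 1) j‖ := hnorm.symm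
    _ ≤ ‖co f (i + 1) j‖ * (a * ‖ε‖ * b) := by
        rw [mul_comm]
        gcongr
        exact_mod_cast hi

theorem pow_mul_norm_co_zero_le (hE : ∀ i j, Epco a b β ε f i j = 0) {j : ℕ}
    (hj : ‖β‖ ≤ b * j) {k : ℕ} (hk : k ≤ b) :
    ((b * j - ‖β‖) / (a * ‖ε‖ * b)) ^ k * ‖co f 0 j‖ ≤ ‖co f k j‖ := by
  set q := (b * j - ‖β‖) / (a * ‖ε‖ * b)
  have hq : 0 ≤ q := div_nonneg (by linarith) (by positivity)
  induction k with
  | zero => simp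
  | succ k ih =>
    calc q ^ (k + 1) * ‖co f 0 j‖ = q * (q ^ k * ‖co f 0 j‖) := by ring
      _ ≤ q * ‖co f k j‖ := by gcongr; exact ih (by omega)
      _ ≤ ‖co f (k + 1) j‖ := le_norm_co_succ hE (by omega)

theorem pow_mul_norm_co_zero_le_norm_co_zero_add (hE : ∀ i j, Epco a b β ε f i j = 0)
    (hP : ∀ i j, Pco a b f i j = 0) {j : ℕ} (hj : ‖β‖ ≤ b * j) :
    ((b * j - ‖β‖) / (a * ‖ε‖ * b)) ^ b * ‖co f 0 j‖ ≤ ((j : ℝ) + a) ^ a * ‖co f 0 (j + a)‖ := by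
  have hrel := congrArg norm (descFactorial_mul_co hP 0 j)
  simp only [zero_add, Nat.descFactorial_self, norm_mul, Complex.norm_natCast] at hrel
  calc ((b * j - ‖β‖) / (a * ‖ε‖ * b)) ^ b * ‖co f 0 j‖ ≤ ‖co f b j‖ :=
        pow_mul_norm_co_zero_le hE hj le_rfl
    _ ≤ b ! * ‖co f b j‖ :=
        le_mul_of_one_le_left (norm_nonneg _) (by exact_mod_cast b.factorial_pos)
    _ = (j + a).descFactorial a * ‖co f 0 (j + a)‖ := hrel
    _ ≤ ((j : ℝ) + a) ^ a * ‖co f 0 (j + a)‖ := by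
        gcongr
        exact_mod_cast Nat.descFactorial_le_pow _ _

theorem eventually_two_mul_gevrey_mul_le (hE : ∀ i j, Epco a b β ε f i j = 0)
    (hP : ∀ i j, Pco a b f i j = 0) (ha : 0 < a) (hε : ε ≠ 0) {s : ℝ} (hs1 : 1 ≤ s)
    (hsb : a * s < b) {C R : ℝ} (hC : 0 ≤ C) (hR : 0 ≤ R) :
    ∀ᶠ j : ℕ in atTop, 2 * (C * R ^ (j + a) * ((j + a)! : ℝ) ^ (s - 1)) * ‖co f 0 j‖
      ≤ C * R ^ j * (j ! : ℝ) ^ (s - 1) * ‖co f 0 (j + a)‖ := by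
  have hb : 0 < b := by exact_mod_cast (by positivity : (0 : ℝ) ≤ a * s).trans_lt hsb
  have hreal := eventually_mul_rpow_le_pow (by positivity) hsb (K := 2 * R ^ a)
    (by positivity) (Nat.cast_nonneg a) (c := a * ‖ε‖ * b) (by positivity) ‖β‖
  filter_upwards [tendsto_natCast_atTop_atTop.eventually hreal,
    tendsto_natCast_atTop_atTop.eventually (eventually_ge_atTop ‖β‖), eventually_ge_atTop 1]
    with j hgrowth hjβ hj1
  have hcol := pow_mul_norm_co_zero_le_norm_co_zero_add hE hP (j := j)
    (by nlinarith [(Nat.one_le_cast (α := ℝ)).mpr hb])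
  have hfact := factorial_add_rpow_le (by linarith : 0 ≤ s - 1) j a
  have hja : (0 : ℝ) < j + a := by positivity
  have hexp : ((j : ℝ) + a) ^ (a * (s - 1)) * ((j : ℝ) + a) ^ a = ((j : ℝ) + a) ^ (a * s) := by
    rw [← Real.rpow_natCast, ← Real.rpow_add hja]
    ring_nf
  rw [← mul_le_mul_iff_left₀ (pow_pos hja a)]
  calc 2 * (C * R ^ (j + a) * ((j + a)! : ℝ) ^ (s - 1)) * ‖co f 0 j‖ * ((j : ℝ) + a) ^ a
      ≤ 2 * (C * R ^ (j + a) * ((j ! : ℝ) ^ (s - 1) * ((j : ℝ) + a) ^ (a * (s - 1))))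
          * ‖co f 0 j‖ * ((j : ℝ) + a) ^ a := by gcongr
    _ = C * R ^ j * (j ! : ℝ) ^ (s - 1) * (2 * R ^ a * ((j : ℝ) + a) ^ (a * s)) * ‖co f 0 j‖ := by
        rw [← hexp, pow_add]
        ring
    _ ≤ C * R ^ j * (j ! : ℝ) ^ (s - 1) * ((j + a : ℝ) ^ a * ‖co f 0 (j + a)‖) := by
        rw [mul_assoc]
        exact mul_le_mul_of_nonneg_left
          ((mul_le_mul_of_nonneg_right hgrowth (norm_nonneg _)).trans hcol) (by positivity)
    _ = C * R ^ j * (j ! : ℝ) ^ (s - 1) * ‖co f 0 (j + a)‖ * ((j : ℝ) + a) ^ a := by ring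

theorem co_zero_eq_zero_of_gevreyFn (hE : ∀ i j, Epco a b β ε f i j = 0)
    (hP : ∀ i j, Pco a b f i j = 0) (ha : 0 < a) (hε : ε ≠ 0) {s : ℝ} (hs1 : 1 ≤ s)
    (hsb : a * s < b) (hG : GevreyFn s (co f)) {j₀ : ℕ}
    (hβ : ∀ m i, β ≠ ((a * i + b * (j₀ + a * m) : ℕ) : ℂ)) : co f 0 j₀ = 0 := by
  by_contra h0
  obtain ⟨C, R, hC, hR, hbound⟩ := hG
  have hne : ∀ m, co f 0 (j₀ + a * m) ≠ 0 := by
    intro m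
    induction m with
    | zero => simpa using h0
    | succ m ih =>
      rw [mul_add_one, ← add_assoc]
      exact co_zero_add_ne_zero hE hP (hβ m) ih
  have hj : Tendsto (fun m => j₀ + a * m) atTop atTop :=
    tendsto_atTop_mono (fun m => (Nat.le_mul_of_pos_left m ha).trans (Nat.le_add_left _ _))
      tendsto_id
  -- `|f(0, j₀ + a m)|` over its Gevrey bound stays `≤ 1`, yet eventually doubles at each step.
  refine not_bddAbove_range_of_eventually_two_mul_le
    (v := fun m => ‖co f 0 (j₀ + a * m)‖ / (C * R ^ (j₀ + a * m) * ((j₀ + a * m)! : ℝ) ^ (s - 1)))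
    (fun m => div_pos (norm_pos_iff.mpr (hne m)) (by positivity)) ?_ ⟨1, ?_⟩
  · filter_upwards [hj.eventually
      (eventually_two_mul_gevrey_mul_le hE hP ha hε hs1 hsb hC.le hR.le)] with m hm
    simp only [mul_add_one, ← add_assoc]
    rw [mul_div_assoc', div_le_div_iff₀ (by positivity) (by positivity)]
    linarith
  · rintro _ ⟨m, rfl⟩
    exact div_le_one_of_le₀ (by simpa using hbound 0 (j₀ + a * m)) (by positivity)

theorem eq_zero_of_gevreyFn_of_co_zero_eq_zero (hE : ∀ i j, Epco a b β ε f i j = 0)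
    (hP : ∀ i j, Pco a b f i j = 0) (hab : Nat.Coprime a b) (ha : 0 < a) (hε : ε ≠ 0)
    {p r : ℕ} (hr : r < a) (hβ : β = ((a * p + b * r : ℕ) : ℂ)) {s : ℝ} (hs1 : 1 ≤ s)
    (hsb : a * s < b) (hG : GevreyFn s (co f)) (h0 : co f 0 r = 0) : f = 0 := by
  refine eq_zero_of_forall_co_eq_zero fun i j => ?_
  induction j using Nat.strong_induction_on generalizing i with
  | _ j ih =>
    rcases lt_or_ge j a with hja | hja
    · refine co_eq_zero_of_co_zero_eq_zero hE ha hε ?_ i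
      rcases eq_or_ne j r with rfl | hjr
      · exact h0
      refine co_zero_eq_zero_of_gevreyFn hE hP ha hε hs1 hsb hG fun m i => hβ ▸ ?_
      refine Nat.cast_injective.ne (mul_add_mul_ne_of_mod_ne hab ?_ i)
      rwa [Nat.add_mul_mod_self_left, Nat.mod_eq_of_lt hja, Nat.mod_eq_of_lt hr]
    · have hrel := descFactorial_mul_co hP i (j - a)
      rw [Nat.sub_add_cancel hja, ih (j - a) (by omega), mul_zero, zero_eq_mul] at hrel
      exact hrel.resolve_left (by exact_mod_cast (Nat.descFactorial_eq_zero_iff_lt.not.mpr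
        (not_lt.mpr hja)))

end FormalSolutions

/-- The coefficient of `t ^ i` in `(t + ε) ^ p / p!`. -/
def shiftedPowCoeff (ε : ℂ) (p i : ℕ) : ℂ :=
  if i ≤ p then ε ^ (p - i) / (i ! * (p - i)! : ℂ) else 0

theorem shiftedPowCoeff_eq_zero_of_lt {ε : ℂ} {p i : ℕ} (h : p < i) : shiftedPowCoeff ε p i = 0 :=
  if_neg (by omega)

theorem mul_shiftedPowCoeff_succ (ε : ℂ) (p i : ℕ) :
    ε * (i + 1) * shiftedPowCoeff ε p (i + 1) = ((p : ℂ) - i) * shiftedPowCoeff ε p i := by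
  rcases lt_trichotomy i p with h | rfl | h
  · obtain ⟨u, rfl⟩ : ∃ u, p = i + u + 1 := ⟨p - i - 1, by omega⟩
    rw [shiftedPowCoeff, shiftedPowCoeff, if_pos (by omega), if_pos (by omega),
      show i + u + 1 - (i + 1) = u by omega, show i + u + 1 - i = u + 1 by omega,
      Nat.factorial_succ, Nat.factorial_succ]
    push_cast
    field_simp
    ring
  · simp [shiftedPowCoeff]
  · rw [shiftedPowCoeff_eq_zero_of_lt h, shiftedPowCoeff_eq_zero_of_lt (by omega)]
    ring

theorem descFactorial_mul_shiftedPowCoeff_add (ε : ℂ) (p i b : ℕ) :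
    ((i + b).descFactorial b : ℂ) * shiftedPowCoeff ε (p + b) (i + b) = shiftedPowCoeff ε p i := by
  by_cases h : i ≤ p
  · have hfact := Nat.factorial_mul_descFactorial (Nat.le_add_left b i)
    rw [Nat.add_sub_cancel] at hfact
    rw [shiftedPowCoeff, shiftedPowCoeff, if_pos (by omega), if_pos h, Nat.add_sub_add_right,
      ← hfact]
    push_cast
    field_simp
  · rw [shiftedPowCoeff_eq_zero_of_lt (by omega), shiftedPowCoeff_eq_zero_of_lt (by omega),
      mul_zero]

/-- Taylor coefficients at `(ε, 0)` of the polynomial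
`∑ₗ x₁ ^ (p - b l) / (p - b l)! · x₂ ^ (r + a l) / (r + a l)!` (over `b l ≤ p`), which `P`
annihilates by telescoping in `l`. -/
def polySolCoeff (a b r p : ℕ) (ε : ℂ) (i j : ℕ) : ℂ :=
  if r ≤ j ∧ a ∣ j - r ∧ b * ((j - r) / a) ≤ p then
    shiftedPowCoeff ε (p - b * ((j - r) / a)) i / j !
  else 0

section PolySol

variable {a b r p : ℕ} {ε : ℂ}

theorem polySolCoeff_add_mul (ha : 0 < a) (i l : ℕ) :
    polySolCoeff a b r p ε i (r + a * l)
      = if b * l ≤ p then shiftedPowCoeff ε (p - b * l) i / (r + a * l)! else 0 := by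
  simp [polySolCoeff, Nat.mul_div_cancel_left l ha]

theorem polySolCoeff_of_forall_ne {j : ℕ} (hj : ∀ l, j ≠ r + a * l) (i : ℕ) :
    polySolCoeff a b r p ε i j = 0 := by
  rw [polySolCoeff, if_neg]
  rintro ⟨hrj, ⟨l, hl⟩, -⟩
  exact hj l (by omega)

theorem epco_ofCo_polySolCoeff (ha : 0 < a) (i j : ℕ) :
    Epco a b ((a * p + b * r : ℕ) : ℂ) ε (ofCo (polySolCoeff a b r p ε)) i j = 0 := by
  rw [Epco, co_ofCo, co_ofCo]
  by_cases hj : ∃ l, j = r + a * l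
  · obtain ⟨l, rfl⟩ := hj
    rw [polySolCoeff_add_mul ha, polySolCoeff_add_mul ha]
    split_ifs with hl
    · have h := mul_shiftedPowCoeff_succ ε (p - b * l) i
      push_cast [hl] at h ⊢
      linear_combination (a / ((r + a * l)! : ℂ)) * h
    · simp
  · rw [not_exists] at hj
    simp [polySolCoeff_of_forall_ne hj]

theorem pco_ofCo_polySolCoeff (ha : 0 < a) (hr : r < a) (i j : ℕ) :
    Pco a b (ofCo (polySolCoeff a b r p ε)) i j = 0 := by
  rw [Pco, co_ofCo, co_ofCo, add_factorial_div_factorial, add_factorial_div_factorial, sub_eq_zero]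
  by_cases hj : ∃ l, j = r + a * l
  · obtain ⟨l, rfl⟩ := hj
    rw [show r + a * l + a = r + a * (l + 1) by ring, polySolCoeff_add_mul ha,
      polySolCoeff_add_mul ha]
    by_cases hl : b * (l + 1) ≤ p
    · rw [if_pos (by rw [mul_add_one] at hl; omega), if_pos hl,
        show p - b * l = p - b * (l + 1) + b by rw [mul_add_one] at hl ⊢; omega, mul_div_assoc',
        descFactorial_mul_shiftedPowCoeff_add]
      have hfact := Nat.factorial_mul_descFactorial (Nat.le_add_left a (r + a * l))
      rw [Nat.add_sub_cancel, show r + a * l + a = r + a * (l + 1) by ring] at hfact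
      have hD : ((r + a * (l + 1)).descFactorial a : ℂ) ≠ 0 := by
        exact_mod_cast (Nat.descFactorial_eq_zero_iff_lt.not.mpr (by rw [mul_add_one]; omega))
      rw [← hfact]
      push_cast
      field_simp
    · rw [if_neg hl, mul_zero]
      split_ifs with hl'
      · rw [shiftedPowCoeff_eq_zero_of_lt (by rw [mul_add_one] at hl; omega), zero_div,
          mul_zero]
      · rw [mul_zero]
  · rw [not_exists] at hj
    rw [polySolCoeff_of_forall_ne hj, polySolCoeff_of_forall_ne, mul_zero, mul_zero]
    rintro (_ | l) hl
    · omega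
    · exact hj l (by rw [mul_add_one] at hl; omega)

theorem polySolCoeff_zero_ne_zero (hε : ε ≠ 0) (ha : 0 < a) :
    polySolCoeff a b r p ε 0 r ≠ 0 := by
  have h := polySolCoeff_add_mul (r := r) (b := b) (p := p) (ε := ε) ha 0 0
  simp only [mul_zero, add_zero, Nat.sub_zero, if_pos (Nat.zero_le p)] at h
  rw [h, shiftedPowCoeff, if_pos (Nat.zero_le p)]
  simp [hε, Nat.factorial_ne_zero]

theorem finite_polySolCoeff_ne_zero (ha : 0 < a) (hb : 0 < b) :
    {q : ℕ × ℕ | polySolCoeff a b r p ε q.1 q.2 ≠ 0}.Finite := by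
  refine ((Set.finite_Iic p).prod (Set.finite_Iic (r + a * p))).subset fun ⟨i, j⟩ hq => ?_
  change polySolCoeff a b r p ε i j ≠ 0 at hq
  by_cases hc : r ≤ j ∧ a ∣ j - r ∧ b * ((j - r) / a) ≤ p
  swap
  · exact absurd (if_neg hc) hq
  rw [polySolCoeff, if_pos hc] at hq
  obtain ⟨hrj, ⟨l, hl⟩, hbl⟩ := hc
  rw [hl, Nat.mul_div_cancel_left l ha] at hbl hq
  have hi : i ≤ p - b * l := by
    by_contra hi
    exact hq (by rw [shiftedPowCoeff_eq_zero_of_lt (by omega), zero_div])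
  have hlp : a * l ≤ a * p := Nat.mul_le_mul_left a (le_trans (Nat.le_mul_of_pos_left l hb) hbl)
  exact ⟨by simp only [Set.mem_Iic]; omega, by simp only [Set.mem_Iic]; omega⟩

end PolySol

theorem gevrey_solutions_below_slope_resonant_general
    (a b : ℕ) (hab : Nat.Coprime a b) (ha : 0 < a)
    (ε : ℂ) (hε : ε ≠ 0) (β : ℂ) (n₁ n₂ : ℕ) (hβ : β = (a : ℂ) * n₁ + (b : ℂ) * n₂)
    (s : ℝ) (hs1 : 1 ≤ s) (hs2 : s < (b : ℝ) / (a : ℝ)) :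
    Module.rank ℂ (GSolP a b β ε s) = 1 ∧
    ∀ f ∈ GSolP a b β ε s, {p : ℕ × ℕ | co f p.1 p.2 ≠ 0}.Finite := by
  have hsb : a * s < b := by rwa [lt_div_iff₀ (by positivity), mul_comm] at hs2
  have hb : 0 < b := by exact_mod_cast (by positivity : (0 : ℝ) ≤ a * s).trans_lt hsb
  set r := n₂ % a
  set p := n₁ + b * (n₂ / a)
  have hβ' : β = ((a * p + b * r : ℕ) : ℂ) := by
    have hN : a * n₁ + b * n₂ = a * p + b * r := by
      nth_rewrite 1 [← Nat.div_add_mod n₂ a]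
      ring
    rw [hβ, ← hN]
    push_cast
    ring
  set g := ofCo (polySolCoeff a b r p ε)
  have hgfin : {q : ℕ × ℕ | co g q.1 q.2 ≠ 0}.Finite := by
    simpa only [g, co_ofCo] using finite_polySolCoeff_ne_zero ha hb
  have hg : g ∈ GSolP a b β ε s :=
    ⟨gevreyFn_of_finite hs1 hgfin, pco_ofCo_polySolCoeff ha (Nat.mod_lt _ ha),
      hβ' ▸ epco_ofCo_polySolCoeff ha⟩
  have hg0 : co g 0 r ≠ 0 := by simpa only [g, co_ofCo] using polySolCoeff_zero_ne_zero hε ha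
  have hle : GSolP a b β ε s ≤ ℂ ∙ g :=
    Submodule.le_span_singleton_of_disjoint_ker (MvPowerSeries.coeff _) hg hg0 <|
      Submodule.disjoint_def.mpr fun f ⟨hG, hP, hE⟩ h0 =>
        eq_zero_of_gevreyFn_of_co_zero_eq_zero hE hP hab ha hε (Nat.mod_lt _ ha) hβ' hs1 hsb hG
          (LinearMap.mem_ker.mp h0)
  refine ⟨(rank_submodule_eq_one_iff _).mpr ⟨g, hg, fun h => hg0 (by simp [h, co_zero]), hle⟩,
    fun f hf => ?_⟩
  obtain ⟨c, rfl⟩ := Submodule.mem_span_singleton.mp (hle hf)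
  exact hgfin.subset fun q hq => right_ne_zero_of_mul (by rwa [← co_smul])

/-- If `β = a·n₁ + b·n₂` with `n₁, n₂ ∈ ℕ` and `1 ≤ s < b/a`, then the space of
Gevrey-order-`s` solutions of the hypergeometric system at `p = (ε,0)`, `ε ≠ 0`, has
dimension `1`, and every element of it is a polynomial (has finite support). -/
theorem gevrey_solutions_below_slope_resonant
    (a b : ℕ) (hab : Nat.Coprime a b) (ha : 0 < a) (haltb : a < b)
    (ε : ℂ) (hε : ε ≠ 0) (β : ℂ) (n₁ n₂ : ℕ) (hβ : β = (a : ℂ) * n₁ + (b : ℂ) * n₂)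
    (s : ℝ) (hs1 : 1 ≤ s) (hs2 : s < (b : ℝ) / (a : ℝ)) :
    Module.rank ℂ (GSolP a b β ε s) = 1 ∧
    ∀ f ∈ GSolP a b β ε s, {p : ℕ × ℕ | co f p.1 p.2 ≠ 0}.Finite :=
  gevrey_solutions_below_slope_resonant_general a b hab ha ε hε β n₁ n₂ hβ s hs1 hs2

end
end
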